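/- For 4/3 < p < 2, define F_p(s,x) = C_p ∫_0^∞ ((s − x^{2p−2}v)_+)^{p/(2(p−1))} v^{(p−2)/(2(p−1))} φ((p−1)²v) dv for s, x ≥ 0, with C_p and φ as above. Then for every fixed x ≥ 0, lim_{s→∞} F_p(s,x)/s^{p/(2(p−1))} = (2^{(3p−2)/(2(p−1))}(p−1)^{(2−p)/(p−1)}/(√π p(2−p))) Γ(1/(2(p−1))). -/

import Mathlib

open MeasureTheory Real Filter

/-- `φ(v) = ∫_0^∞ λ e^{−λ} e^{−vλ²/2} dλ`. -/
noncomputable def phiFun (v : ℝ) : ℝ :=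
  ∫ l in Set.Ioi (0 : ℝ), l * Real.exp (-l) * Real.exp (-(v / 2) * l ^ 2)

/-- The constant `C_p`. -/
noncomputable def Cp (p : ℝ) : ℝ :=
  (4 * (p - 1) ^ 2 / (π * p * (2 - p))) * Real.sin ((π / 2) * ((2 - p) / (p - 1)))

/-- The function `F_p(s,x)`. -/
noncomputable def Fp (p s x : ℝ) : ℝ :=
  Cp p * ∫ v in Set.Ioi (0 : ℝ),
    (max (s - x ^ (2 * p - 2) * v) 0) ^ (p / (2 * (p - 1))) *
      v ^ ((p - 2) / (2 * (p - 1))) * phiFun ((p - 1) ^ 2 * v)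

/-! Since `x ^ (2 * p - 2) ≥ 0`, the ratio `((s - x^{2p-2} v)_+ / s)^{p/(2(p-1))}` lies in
`[0, 1]` and tends to `1`, so by dominated convergence `F_p(s, x) / s^{p/(2(p-1))}` tends to
`C_p ∫ v^b φ((p-1)² v) dv` with `b = (p-2)/(2(p-1)) ∈ (-1, 0)`.
Expanding `φ` and exchanging the integrals, the inner integral in `v` is a Gamma integral, so
`∫ v^b φ(c v) dv = (2/c)^{b+1} Γ(b+1) Γ(-2b)`. With `s = -b`, the reflection and duplication
formulas turn `sin(π s) Γ(1-s) Γ(2s)`, which is what `C_p` produces, into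
`2^{2s-1} √π Γ(s + 1/2)`. -/

open Set Topology

lemma tendsto_max_sub_rpow_div_rpow (u α : ℝ) :
    Tendsto (fun s : ℝ => max (s - u) 0 ^ α / s ^ α) atTop (𝓝 1) := by
  have h : Tendsto (fun s : ℝ => (1 - u * s⁻¹) ^ α) atTop (𝓝 1) := by
    simpa using ((tendsto_inv_atTop_zero.const_mul u).const_sub 1).rpow_const (Or.inl (by simp))
  refine h.congr' ?_
  filter_upwards [eventually_gt_atTop (max u 0)] with s hs
  have hs0 : 0 < s := (le_max_right u 0).trans_lt hs
  have hsu : 0 ≤ s - u := by linarith [le_max_left u 0]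
  rw [max_eq_left hsu, ← div_rpow hsu hs0.le, sub_div, div_self hs0.ne', div_eq_mul_inv]

lemma max_sub_rpow_div_rpow_le_one {s u α : ℝ} (hs : 0 < s) (hu : 0 ≤ u) (hα : 0 ≤ α) :
    max (s - u) 0 ^ α / s ^ α ≤ 1 :=
  div_le_one_of_le₀ (rpow_le_rpow (le_max_right _ _) (max_le (by linarith) hs.le) hα)
    (rpow_nonneg hs.le α)

theorem tendsto_integral_max_sub_rpow_div_rpow_mul {X : Type*} [MeasurableSpace X]
    {μ : Measure X} {u g : X → ℝ} {α : ℝ} (hα : 0 ≤ α) (hu : AEMeasurable u μ)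
    (hu0 : ∀ᵐ x ∂μ, 0 ≤ u x) (hg : Integrable g μ) :
    Tendsto (fun s => ∫ x, max (s - u x) 0 ^ α / s ^ α * g x ∂μ) atTop
      (𝓝 (∫ x, g x ∂μ)) := by
  refine tendsto_integral_filter_of_dominated_convergence (fun x => ‖g x‖) ?_ ?_ hg.norm ?_
  · exact .of_forall fun s => (by fun_prop : AEMeasurable _ μ).aestronglyMeasurable.mul
      hg.aestronglyMeasurable
  · filter_upwards [eventually_gt_atTop 0] with s hs
    filter_upwards [hu0] with x hx
    rw [norm_mul, Real.norm_of_nonneg (by positivity)]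
    exact mul_le_of_le_one_left (norm_nonneg _) (max_sub_rpow_div_rpow_le_one hs hx hα)
  · exact .of_forall fun x => by
      simpa using (tendsto_max_sub_rpow_div_rpow (u x) α).mul_const (g x)

theorem sin_mul_Gamma_one_sub_mul_Gamma_two_mul {s : ℝ} (hs0 : 0 < s) (hs1 : s < 1) :
    sin (π * s) * Gamma (1 - s) * Gamma (2 * s) = 2 ^ (2 * s - 1) * √π * Gamma (s + 1 / 2) := by
  have hsin : sin (π * s) ≠ 0 :=
    (sin_pos_of_pos_of_lt_pi (by positivity) (by nlinarith [pi_pos])).ne'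
  have reflection := Gamma_mul_Gamma_one_sub s
  have duplication := Gamma_mul_Gamma_add_half s
  have hpow : (2 : ℝ) ^ (2 * s - 1) * 2 ^ (1 - 2 * s) = 1 := by
    rw [← rpow_add two_pos]; norm_num
  refine mul_left_cancel₀ (Gamma_pos_of_pos hs0).ne' ?_
  calc Gamma s * (sin (π * s) * Gamma (1 - s) * Gamma (2 * s))
      = sin (π * s) * (Gamma s * Gamma (1 - s)) * Gamma (2 * s) := by ring
    _ = π * Gamma (2 * s) := by rw [reflection, mul_div_cancel₀ _ hsin]
    _ = Gamma s * (2 ^ (2 * s - 1) * √π * Gamma (s + 1 / 2)) := by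
      linear_combination (-(2 : ℝ) ^ (2 * s - 1) * √π) * duplication
        - (√π * √π * Gamma (2 * s)) * hpow - Gamma (2 * s) * mul_self_sqrt pi_pos.le

section phiFun_moment

variable {b c : ℝ}

lemma integral_phiFun_integrand_wrt_v (hb : -1 < b) (hc : 0 < c) {l : ℝ} (hl : 0 < l) :
    ∫ v in Ioi 0, v ^ b * (l * exp (-l) * exp (-(c * v / 2) * l ^ 2))
      = (2 / c) ^ (b + 1) * Gamma (b + 1) * (exp (-l) * l ^ (-2 * b - 1)) := by
  have ht : 0 < c / 2 * l ^ 2 := by positivity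
  have hpow : (1 / (c / 2 * l ^ 2)) ^ (b + 1) = (2 / c) ^ (b + 1) * l ^ (-2 * b - 2) := by
    rw [show 1 / (c / 2 * l ^ 2) = 2 / c * (l ^ 2)⁻¹ by field_simp, mul_rpow (by positivity)
      (by positivity), inv_rpow (by positivity), ← rpow_natCast, ← rpow_mul hl.le,
      ← rpow_neg hl.le]
    ring_nf
  calc ∫ v in Ioi 0, v ^ b * (l * exp (-l) * exp (-(c * v / 2) * l ^ 2))
      = l * exp (-l) * ∫ v in Ioi 0, v ^ (b + 1 - 1) * exp (-(c / 2 * l ^ 2 * v)) := by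
        rw [← integral_const_mul]
        refine setIntegral_congr_fun measurableSet_Ioi fun v _ => ?_
        simp only [add_sub_cancel_right]
        ring_nf
    _ = (2 / c) ^ (b + 1) * Gamma (b + 1) * (exp (-l) * l ^ (-2 * b - 1)) := by
        rw [integral_rpow_mul_exp_neg_mul_Ioi (by linarith) ht, hpow,
          show -2 * b - 1 = 1 + (-2 * b - 2) by ring, rpow_add hl, rpow_one]
        ring

lemma integrable_phiFun_integrand_prod (hb : -1 < b) (hb0 : b < 0) (hc : 0 < c) :
    Integrable (fun z : ℝ × ℝ => z.2 ^ b * (z.1 * exp (-z.1) * exp (-(c * z.2 / 2) * z.1 ^ 2)))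
      ((volume.restrict (Ioi 0)).prod (volume.restrict (Ioi 0))) := by
  refine (integrable_prod_iff (by fun_prop)).2 ⟨?_, ?_⟩
  · filter_upwards [self_mem_ae_restrict measurableSet_Ioi] with l (hl : 0 < l)
    refine IntegrableOn.congr_fun ((integrableOn_rpow_mul_exp_neg_mul_rpow hb one_pos
      (by positivity : 0 < c / 2 * l ^ 2)).const_mul (l * exp (-l))) (fun v _ => ?_)
      measurableSet_Ioi
    simp only [rpow_one]
    ring_nf
  · have hGamma := (GammaIntegral_convergent (s := -2 * b) (by linarith)).const_mul
      ((2 / c) ^ (b + 1) * Gamma (b + 1))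
    refine IntegrableOn.congr_fun hGamma (fun l (hl : 0 < l) => ?_) measurableSet_Ioi
    rw [← integral_phiFun_integrand_wrt_v hb hc hl]
    refine setIntegral_congr_fun measurableSet_Ioi fun v (hv : 0 < v) => ?_
    rw [Real.norm_of_nonneg (by positivity)]

lemma integral_phiFun_integrand_wrt_l (v : ℝ) :
    ∫ l in Ioi 0, v ^ b * (l * exp (-l) * exp (-(c * v / 2) * l ^ 2)) = v ^ b * phiFun (c * v) :=
  integral_const_mul _ _

theorem integrableOn_rpow_mul_phiFun (hb : -1 < b) (hb0 : b < 0) (hc : 0 < c) :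
    IntegrableOn (fun v => v ^ b * phiFun (c * v)) (Ioi 0) :=
  (integrable_phiFun_integrand_prod hb hb0 hc).integral_prod_right.congr
    (.of_forall integral_phiFun_integrand_wrt_l)

theorem integral_rpow_mul_phiFun (hb : -1 < b) (hb0 : b < 0) (hc : 0 < c) :
    ∫ v in Ioi 0, v ^ b * phiFun (c * v)
      = (2 / c) ^ (b + 1) * Gamma (b + 1) * Gamma (-2 * b) := by
  calc ∫ v in Ioi 0, v ^ b * phiFun (c * v)
      = ∫ v in Ioi 0, ∫ l in Ioi 0, v ^ b * (l * exp (-l) * exp (-(c * v / 2) * l ^ 2)) := by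
        simp only [integral_phiFun_integrand_wrt_l]
    _ = ∫ l in Ioi 0, ∫ v in Ioi 0, v ^ b * (l * exp (-l) * exp (-(c * v / 2) * l ^ 2)) :=
        (integral_integral_swap (integrable_phiFun_integrand_prod hb hb0 hc)).symm
    _ = ∫ l in Ioi 0, (2 / c) ^ (b + 1) * Gamma (b + 1) * (exp (-l) * l ^ (-2 * b - 1)) :=
        setIntegral_congr_fun measurableSet_Ioi fun l hl => integral_phiFun_integrand_wrt_v hb hc hl
    _ = (2 / c) ^ (b + 1) * Gamma (b + 1) * Gamma (-2 * b) := by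
        rw [integral_const_mul, Gamma_eq_integral (s := -2 * b) (by linarith)]

end phiFun_moment

theorem Cp_mul_integral_rpow_mul_phiFun {p : ℝ} (hp1 : 4 / 3 < p) (hp2 : p < 2) :
    Cp p * ∫ v in Ioi 0, v ^ ((p - 2) / (2 * (p - 1))) * phiFun ((p - 1) ^ 2 * v)
      = 2 ^ ((3 * p - 2) / (2 * (p - 1))) * (p - 1) ^ ((2 - p) / (p - 1)) /
          (√π * p * (2 - p)) * Gamma (1 / (2 * (p - 1))) := by
  have hp : 0 < p - 1 := by linarith
  set s := (2 - p) / (2 * (p - 1)) with hs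
  have hs0 : 0 < s := div_pos (by linarith) (by positivity)
  have hs1 : s < 1 := (div_lt_one (by positivity)).2 (by linarith)
  have hb : (p - 2) / (2 * (p - 1)) = -s := by rw [hs]; ring
  have hsin : π / 2 * ((2 - p) / (p - 1)) = π * s := by rw [hs]; field_simp
  have hexp2 : (3 * p - 2) / (2 * (p - 1)) = 2 + s := by rw [hs]; field_simp; ring
  have hexp1 : (2 - p) / (p - 1) = 2 * s := by rw [hs]; field_simp
  have hGamma : 1 / (2 * (p - 1)) = s + 1 / 2 := by rw [hs]; field_simp; ring
  have hpow1 : (2 / (p - 1) ^ 2) ^ (1 - s) * (p - 1) ^ 2 = 2 ^ (1 - s) * (p - 1) ^ (2 * s) := by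
    rw [div_rpow zero_le_two (by positivity), ← rpow_natCast, ← rpow_mul hp.le,
      div_mul_eq_mul_div, div_eq_iff (by positivity), mul_assoc, ← rpow_add hp]
    congr 2
    push_cast
    ring
  have hpow2 : (2 : ℝ) ^ (2 + s) = 4 * (2 ^ (1 - s) * 2 ^ (2 * s - 1)) := by
    rw [← rpow_add two_pos, rpow_add two_pos]
    ring_nf
  rw [hb, integral_rpow_mul_phiFun (by linarith) (by linarith) (by positivity), Cp, hsin, hexp2,
    hexp1, hGamma, hpow2, show -2 * -s = 2 * s by ring, show -s + 1 = 1 - s by ring]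
  calc _ = 4 / (π * p * (2 - p)) * ((2 / (p - 1) ^ 2) ^ (1 - s) * (p - 1) ^ 2)
        * (sin (π * s) * Gamma (1 - s) * Gamma (2 * s)) := by ring
    _ = _ := by
      rw [hpow1, sin_mul_Gamma_one_sub_mul_Gamma_two_mul hs0 hs1]
      field_simp
      rw [sq_sqrt pi_pos.le]

theorem Fp_asymptotics (p : ℝ) (hp1 : 4 / 3 < p) (hp2 : p < 2) (x : ℝ) (hx : 0 ≤ x) :
    Tendsto (fun s => Fp p s x / s ^ (p / (2 * (p - 1)))) atTop
      (nhds ((2 ^ ((3 * p - 2) / (2 * (p - 1))) * (p - 1) ^ ((2 - p) / (p - 1)) /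
          (Real.sqrt π * p * (2 - p))) * Real.Gamma (1 / (2 * (p - 1))))) := by
  have hp : 0 < p - 1 := by linarith
  have hb : -1 < (p - 2) / (2 * (p - 1)) := by rw [lt_div_iff₀ (by positivity)]; linarith
  have hb0 : (p - 2) / (2 * (p - 1)) < 0 := div_neg_of_neg_of_pos (by linarith) (by positivity)
  have hlim := (tendsto_integral_max_sub_rpow_div_rpow_mul (by positivity : 0 ≤ p / (2 * (p - 1)))
    (by fun_prop : AEMeasurable (fun v => x ^ (2 * p - 2) * v) (volume.restrict (Ioi 0)))
    ((ae_restrict_iff' measurableSet_Ioi).2 (.of_forall fun v (hv : 0 < v) => by positivity))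
    (integrableOn_rpow_mul_phiFun hb hb0 (pow_pos hp 2))).const_mul (Cp p)
  rw [Cp_mul_integral_rpow_mul_phiFun hp1 hp2] at hlim
  refine hlim.congr fun s => ?_
  rw [Fp, mul_div_assoc, ← integral_div]
  congr 1
  exact integral_congr_ae (.of_forall fun v => by ring)
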